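/- arXiv:2208.03606 — 3 statements merged into one kernel-verified Lean document; each statement's English description precedes it below -/
import Mathlib

section
/- If L is a finite semimodular lattice and α is a congruence of L, then the quotient lattice L/α is semimodular. -/
/-!
A cover `a ⋖ b` of the quotient lifts to a cover `z ⋖ z'` of `L`: take `z` maximal in the class
of `a` below a lift of `b`, and any `z'` covering `z` below that lift. Conversely, a surjective
lattice homomorphism maps a cover to a cover or collapses it. So for `c = f w`, semimodularity
of `L` applied to `z ⋖ z'` and `z ≤ z ⊔ w` maps down to the required relation between
`a ⊔ c` and `b ⊔ c`.
-/

/-- A lattice is (upper) semimodular: `a ⋖ b` and `a ≤ c` imply `a ⊔ c ⪯ b ⊔ c`. -/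
def IsSemimodular (L : Type*) [Lattice L] : Prop :=
  ∀ a b c : L, a ⋖ b → a ≤ c → (a ⊔ c = b ⊔ c ∨ (a ⊔ c) ⋖ (b ⊔ c))

namespace LatticeHom

variable {L M : Type*} [Lattice L] [Lattice M] {f : LatticeHom L M}

theorem eq_or_covBy_map_of_surjective (hf : Function.Surjective f) {u v : L} (h : u ⋖ v) :
    f u = f v ∨ f u ⋖ f v := by
  refine or_iff_not_imp_left.2 fun hne =>
    ⟨(OrderHomClass.mono f h.le).lt_of_ne hne, fun m hum hmv => ?_⟩
  obtain ⟨z, rfl⟩ := hf m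
  have hmap : f (u ⊔ z ⊓ v) = f z := by
    rw [map_sup, map_inf, inf_eq_left.2 hmv.le, sup_eq_right.2 hum.le]
  rcases h.eq_or_eq le_sup_left (sup_le h.le inf_le_right) with heq | heq
  · exact hum.ne (heq ▸ hmap)
  · exact hmv.ne (heq ▸ hmap).symm

theorem exists_covBy_map_eq_of_covBy [WellFoundedLT L] [WellFoundedGT L]
    (hf : Function.Surjective f) {a b : M} (hab : a ⋖ b) :
    ∃ z z', z ⋖ z' ∧ f z = a ∧ f z' = b := by
  obtain ⟨x, rfl⟩ := hf a
  obtain ⟨y, rfl⟩ := hf b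
  have hfxy : f (x ⊔ y) = f y := by rw [map_sup, sup_eq_right.2 hab.le]
  obtain ⟨z, ⟨hzxy, hfz⟩, hzmax⟩ :=
    wellFounded_gt.has_min {z | z ≤ x ⊔ y ∧ f z = f x} ⟨x, le_sup_left, rfl⟩
  have hz_lt : z < x ⊔ y := hzxy.lt_of_ne fun h => hab.ne (hfz ▸ h ▸ hfxy)
  obtain ⟨z', hzz', hz'xy⟩ := exists_covBy_le_of_lt hz_lt
  refine ⟨z, z', hzz', hfz, ?_⟩
  have hfz'_ne : f z' ≠ f x := fun h => hzmax z' ⟨hz'xy, h⟩ hzz'.lt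
  have hlow : f x ≤ f z' := hfz ▸ OrderHomClass.mono f hzz'.le
  have hhigh : f z' ≤ f y := hfxy ▸ OrderHomClass.mono f hz'xy
  exact (hab.eq_or_eq hlow hhigh).resolve_left hfz'_ne

end LatticeHom

/-- The congruence `α` is encoded as the kernel of the surjective lattice homomorphism `f`,
and `L/α` as its codomain `M`. -/
theorem quotient_semimodular_of_finite_semimodular
    {L M : Type*} [Lattice L] [Fintype L] [Lattice M]
    (f : LatticeHom L M) (hf : Function.Surjective f)
    (hL : IsSemimodular L) : IsSemimodular M := by
  intro a b c hab _
  obtain ⟨z, z', hzz', rfl, rfl⟩ := f.exists_covBy_map_eq_of_covBy hf hab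
  obtain ⟨w, rfl⟩ := hf c
  have hlow : f z ⊔ f w = f (z ⊔ (z ⊔ w)) := by rw [sup_left_idem, map_sup]
  have hhigh : f z' ⊔ f w = f (z' ⊔ (z ⊔ w)) := by
    rw [← sup_assoc, sup_eq_left.2 hzz'.le, map_sup]
  rw [hlow, hhigh]
  rcases hL z z' (z ⊔ w) hzz' le_sup_left with heq | hcov
  · exact Or.inl (congrArg f heq)
  · exact f.eq_or_covBy_map_of_surjective hf hcov
end

section
/- Every congruence of a finite semimodular lattice is cover-preserving: if α is a congruence of a finite semimodular lattice L and a ⋖ b in L, then in the quotient L/α either a/α = b/α or a/α ⋖ b/α. -/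
section

variable {F α β : Type*} [Lattice α] [Lattice β] [FunLike F α β] [LatticeHomClass F α β]

theorem exists_mem_Icc_apply_eq_of_apply_mem_Icc (f : F) {a b c : α} (hab : a ≤ b)
    (hc : f c ∈ Set.Icc (f a) (f b)) : ∃ d ∈ Set.Icc a b, f d = f c :=
  ⟨(a ⊔ c) ⊓ b, ⟨le_inf le_sup_left hab, inf_le_right⟩, by
    rw [map_inf, map_sup, sup_of_le_right hc.1, inf_of_le_left hc.2]⟩

theorem apply_wcovBy_apply_of_surjective {f : F} (hf : Function.Surjective f) {a b : α}
    (hab : a ⩿ b) : f a ⩿ f b := by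
  refine ⟨OrderHomClass.mono f hab.le, fun m ham hmb => ?_⟩
  obtain ⟨c, rfl⟩ := hf m
  obtain ⟨d, hd, hdc⟩ := exists_mem_Icc_apply_eq_of_apply_mem_Icc f hab.le ⟨ham.le, hmb.le⟩
  rcases hab.eq_or_eq hd.1 hd.2 with rfl | rfl
  · exact ham.ne hdc
  · exact hmb.ne' hdc

end

theorem congruence_cover_preserving_general
    {L M : Type*} [Lattice L] [Lattice M]
    (f : LatticeHom L M) (hf : Function.Surjective f)
    {a b : L} (hab : a ⋖ b) :
    f a = f b ∨ f a ⋖ f b :=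
  (apply_wcovBy_apply_of_surjective hf hab.wcovBy).eq_or_covBy

/-- Every congruence of a finite semimodular lattice is cover-preserving: if `a ⋖ b` in
`L`, then in the quotient (encoded by the surjective lattice homomorphism `f`) either
`a/α = b/α` or `a/α ⋖ b/α`. -/
theorem congruence_cover_preserving
    {L M : Type*} [Lattice L] [Fintype L] [Lattice M]
    (hL : IsSemimodular L)
    (f : LatticeHom L M) (hf : Function.Surjective f)
    {a b : L} (hab : a ⋖ b) :
    f a = f b ∨ f a ⋖ f b :=
  congruence_cover_preserving_general f hf hab
end

section
/- Let L be a finite semimodular lattice with chains C and C' such that every nonzero join-irreducible element of L lies in C ∪ C' and c ∧ c' = 0 for all c ∈ C, c' ∈ C'. If α is a congruence of L such that L/α is not a chain, then L/α also admits chains D and D' with Ji(L/α) ⊆ D ∪ D' and d ∧ d' = 0 (the bottom of L/α) for all d ∈ D, d' ∈ D'. -/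
/-! A surjective lattice homomorphism maps chains to chains and preserves `⊥`, so the images
of `C` and `C'` are chains whose elements still meet in `⊥`. Every join-irreducible element
of the quotient is hit by a join-irreducible element of `L`: decompose a preimage into
join-irreducibles; since the image is the join of their images, irreducibility forces it to
equal one of them. -/

theorem Monotone.map_bot_of_surjective {α β : Type*} [Preorder α] [OrderBot α] [PartialOrder β]
    [OrderBot β] {f : α → β} (hmono : Monotone f) (hf : Function.Surjective f) : f ⊥ = ⊥ := by
  obtain ⟨x, hx⟩ := hf ⊥
  exact le_bot_iff.mp (hx ▸ hmono bot_le)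

theorem exists_supIrred_map_eq_of_supIrred {α β F : Type*} [SemilatticeSup α] [OrderBot α]
    [WellFoundedLT α] [SemilatticeSup β] [OrderBot β] [FunLike F α β] [SupHomClass F α β]
    (f : F) (hbot : f ⊥ = ⊥) {a : α} (ha : SupIrred (f a)) :
    ∃ j, SupIrred j ∧ f j = f a := by
  classical
  obtain ⟨s, hs, hirr⟩ := exists_supIrred_decomposition a
  have hsup : s.sup f = f a := by
    rw [← hs, Finset.apply_sup_eq_sup_comp f (map_sup f) hbot, Function.comp_id]
  obtain ⟨j, hjs, hj⟩ := ha.finset_sup_eq hsup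
  exact ⟨j, hirr hjs, hj⟩

theorem quotient_slim_rectangular_general
    {L M : Type*} [Lattice L] [Fintype L] [OrderBot L] [Lattice M] [OrderBot M]
    (C C' : Set L) (hC : IsChain (· ≤ ·) C) (hC' : IsChain (· ≤ ·) C')
    (hJi : {a : L | SupIrred a} ⊆ C ∪ C')
    (hmeet : ∀ c ∈ C, ∀ c' ∈ C', c ⊓ c' = ⊥)
    (f : LatticeHom L M) (hf : Function.Surjective f) :
    ∃ D D' : Set M, IsChain (· ≤ ·) D ∧ IsChain (· ≤ ·) D' ∧
      {a : M | SupIrred a} ⊆ D ∪ D' ∧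
      ∀ d ∈ D, ∀ d' ∈ D', d ⊓ d' = ⊥ := by
  have hmono : Monotone f := OrderHomClass.mono f
  have hbot : f ⊥ = ⊥ := hmono.map_bot_of_surjective hf
  refine ⟨f '' C, f '' C', hmono.isChain_image hC, hmono.isChain_image hC', ?_, ?_⟩
  · intro m hm
    obtain ⟨a, rfl⟩ := hf m
    obtain ⟨j, hj, hja⟩ := exists_supIrred_map_eq_of_supIrred f hbot hm
    exact (hJi hj).imp (⟨j, ·, hja⟩) (⟨j, ·, hja⟩)
  · rintro _ ⟨c, hc, rfl⟩ _ ⟨c', hc', rfl⟩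
    rw [← map_inf, hmeet c hc c' hc', hbot]

/-- Let `L` be a finite semimodular lattice with chains `C`, `C'` such that every nonzero
join-irreducible element of `L` lies in `C ∪ C'` and `c ⊓ c' = ⊥` for all `c ∈ C`,
`c' ∈ C'`.  If `α` is a congruence of `L` (encoded as the kernel of the surjective
lattice homomorphism `f`) such that `L/α` (encoded as `M`) is not a chain, then `M`
also admits chains `D`, `D'` with `SupIrred ⊆ D ∪ D'` and `d ⊓ d' = ⊥` for all
`d ∈ D`, `d' ∈ D'`. -/
theorem quotient_slim_rectangular
    {L M : Type*} [Lattice L] [Fintype L] [OrderBot L] [Lattice M] [OrderBot M]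
    (hL : IsSemimodular L)
    (C C' : Set L) (hC : IsChain (· ≤ ·) C) (hC' : IsChain (· ≤ ·) C')
    (hJi : {a : L | SupIrred a} ⊆ C ∪ C')
    (hmeet : ∀ c ∈ C, ∀ c' ∈ C', c ⊓ c' = ⊥)
    (f : LatticeHom L M) (hf : Function.Surjective f)
    (hnotchain : ¬ ∀ x y : M, x ≤ y ∨ y ≤ x) :
    ∃ D D' : Set M, IsChain (· ≤ ·) D ∧ IsChain (· ≤ ·) D' ∧
      {a : M | SupIrred a} ⊆ D ∪ D' ∧
      ∀ d ∈ D, ∀ d' ∈ D', d ⊓ d' = ⊥ :=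
  quotient_slim_rectangular_general C C' hC hC' hJi hmeet f hf
end
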